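/- (Bounded Real Lemma, sufficiency part.) Let L, H, V, N, Z be bounded operators on a complex Hilbert space with H self-adjoint and V self-adjoint nonnegative, let g > 0 and λ ≥ 0 be real numbers, and set Γ = g²·I − Z*Z. Suppose there is a real c > 0 with Γ ≥ c·I (so Γ is invertible with bounded inverse Γ⁻¹), and suppose 𝓛_L(V) − i[V, H] + N*N + ([L*, V] + N*Z)Γ⁻¹([V, L] + Z*N) − λ·I ≤ 0. Then for every bounded operator w, 𝓛_L(V) − i[V, H] − w*Γw + w*([V, L] + Z*N) + ([L*, V] + N*Z)w + N*N − λ·I ≤ 0. -/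

import Mathlib

noncomputable section

open Finset
open scoped ComplexOrder

variable {E : Type*} [NormedAddCommGroup E] [InnerProductSpace ℂ E] [CompleteSpace E]

/-- Operator ordering: `A ≤ B` iff `⟨ψ, Aψ⟩ ≤ ⟨ψ, Bψ⟩` for all `ψ`. -/
def opLE (A B : E →L[ℂ] E) : Prop :=
  ∀ ψ : E, (inner ℂ ψ (A ψ) : ℂ) ≤ (inner ℂ ψ (B ψ) : ℂ)

/-- The single-channel Lindblad superoperator `𝓛_L(X) = (1/2)(L*[X,L] + [L*,X]L)`. -/
def lind1 (L X : E →L[ℂ] E) : E →L[ℂ] E :=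
  (2 : ℂ)⁻¹ • (star L * ⁅X, L⁆ + ⁅star L, X⁆ * L)

/-!
Write `Γ = g² − Z*Z` and `M = [V, L] + Z*N`; since `V` is self-adjoint, `[L*, V] + N*Z = M*`.
Completing the square,
`w*M + M*w − w*Γw = M*Γ⁻¹M − (w − Γ⁻¹M)*Γ(w − Γ⁻¹M) ≤ M*Γ⁻¹M`,
because `Γ ≥ c > 0` is invertible and nonnegative. So the operator in the conclusion is
dominated by the one in the hypothesis.
-/

open scoped Ring

theorem star_lie {R : Type*} [Ring R] [StarRing R] (a b : R) :
    star ⁅a, b⁆ = ⁅star b, star a⁆ := by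
  simp only [Ring.lie_def, star_sub, star_mul]

section CompletingTheSquare

variable {R : Type*} [Ring R] [StarRing R]

theorem star_sub_mul_mul_sub_ringInverse {Γ : R} (hΓ : IsUnit Γ) (hΓsa : IsSelfAdjoint Γ)
    (w M : R) :
    star (w - Γ⁻¹ʳ * M) * Γ * (w - Γ⁻¹ʳ * M)
      = star w * Γ * w - star w * M - star M * w + star M * Γ⁻¹ʳ * M := by
  have hJ : star Γ⁻¹ʳ = Γ⁻¹ʳ := hΓsa.ringInverse.star_eq
  have h1 : Γ * Γ⁻¹ʳ = 1 := Ring.mul_inverse_cancel Γ hΓ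
  have h2 : Γ⁻¹ʳ * Γ = 1 := Ring.inverse_mul_cancel Γ hΓ
  simp only [star_sub, star_mul, hJ, sub_mul, mul_sub, mul_assoc]
  simp only [← mul_assoc Γ, h1, ← mul_assoc Γ⁻¹ʳ Γ, h2, one_mul]
  abel

variable [PartialOrder R] [StarOrderedRing R]

theorem star_mul_add_sub_le_star_mul_ringInverse_mul {Γ : R} (hΓ : 0 ≤ Γ) (hΓu : IsUnit Γ)
    (w M : R) : star w * M + star M * w - star w * Γ * w ≤ star M * Γ⁻¹ʳ * M := by
  rw [← sub_nonneg]
  convert star_left_conjugate_nonneg hΓ (w - Γ⁻¹ʳ * M) using 1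
  rw [star_sub_mul_mul_sub_ringInverse hΓu (.of_nonneg hΓ)]
  abel

end CompletingTheSquare

theorem ContinuousLinearMap.isPositive_iff_inner_nonneg {F : Type*} [NormedAddCommGroup F]
    [InnerProductSpace ℂ F] (T : F →L[ℂ] F) :
    T.IsPositive ↔ ∀ x, 0 ≤ inner ℂ x (T x) := by
  refine ⟨fun hT ↦ hT.inner_nonneg_right, fun hT ↦ ?_⟩
  have hsymm (x : F) : inner ℂ (T x) x = inner ℂ x (T x) := by
    rw [← inner_conj_symm]
    exact (IsSelfAdjoint.of_nonneg (hT x)).star_eq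
  refine T.isPositive_iff.2 ⟨?_, fun x ↦ hsymm x ▸ hT x⟩
  refine (LinearMap.isSymmetric_iff_inner_map_self_real _).2 fun x ↦ ?_
  exact (inner_conj_symm _ _).trans (hsymm x).symm

omit [CompleteSpace E] in
theorem opLE_iff_le (A B : E →L[ℂ] E) : opLE A B ↔ A ≤ B := by
  simp only [opLE, ContinuousLinearMap.le_def, ContinuousLinearMap.isPositive_iff_inner_nonneg,
    _root_.sub_apply, inner_sub_right, sub_nonneg]

theorem stmt_10_general
    (L Hm V N Z : E →L[ℂ] E) (g lam c : ℝ)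
    (hV : IsSelfAdjoint V)
    (hc : 0 < c)
    (hΓ : opLE ((c : ℂ) • 1) ((g : ℂ) ^ 2 • 1 - star Z * Z))
    (h : opLE (lind1 L V + (-Complex.I) • ⁅V, Hm⁆ + star N * N
      + (⁅star L, V⁆ + star N * Z)
          * Ring.inverse ((g : ℂ) ^ 2 • 1 - star Z * Z) * (⁅V, L⁆ + star Z * N)
      - (lam : ℂ) • 1) 0) :
    ∀ w : E →L[ℂ] E,
      opLE (lind1 L V + (-Complex.I) • ⁅V, Hm⁆
        - star w * ((g : ℂ) ^ 2 • 1 - star Z * Z) * w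
        + star w * (⁅V, L⁆ + star Z * N) + (⁅star L, V⁆ + star N * Z) * w
        + star N * N - (lam : ℂ) • 1) 0 := by
  intro w
  set Γ : E →L[ℂ] E := (g : ℂ) ^ 2 • 1 - star Z * Z
  set M : E →L[ℂ] E := ⁅V, L⁆ + star Z * N
  set P : E →L[ℂ] E := lind1 L V + (-Complex.I) • ⁅V, Hm⁆ + star N * N - (lam : ℂ) • 1
  have hM : ⁅star L, V⁆ + star N * Z = star M := by
    simp only [M, star_add, star_lie, star_mul, star_star, hV.star_eq]
  rw [opLE_iff_le] at hΓ h ⊢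
  rw [hM] at h ⊢
  have hcI : IsStrictlyPositive ((c : ℂ) • (1 : E →L[ℂ] E)) :=
    .smul (by exact_mod_cast hc) isStrictlyPositive_one
  have hq := star_mul_add_sub_le_star_mul_ringInverse_mul (hcI.nonneg.trans hΓ)
    (CStarAlgebra.isUnit_of_le _ hΓ hcI) w M
  calc _ = P + (star w * M + star M * w - star w * Γ * w) := by simp only [P]; abel
    _ ≤ P + star M * Γ⁻¹ʳ * M := by gcongr
    _ = _ := by simp only [P]; abel
    _ ≤ 0 := h

/-- Bounded Real Lemma, sufficiency: with `Γ = g²I − Z*Z`, if `Γ ≥ cI`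
for some `c > 0` (so `Γ` is invertible; `Γ⁻¹` is `Ring.inverse Γ`) and
`𝓛_L(V) − i[V,H] + N*N + ([L*,V] + N*Z)Γ⁻¹([V,L] + Z*N) − λI ≤ 0`, then for every
bounded operator `w`,
`𝓛_L(V) − i[V,H] − w*Γw + w*([V,L] + Z*N) + ([L*,V] + N*Z)w + N*N − λI ≤ 0`. -/
theorem stmt_10
    (L Hm V N Z : E →L[ℂ] E) (g lam c : ℝ)
    (hHm : IsSelfAdjoint Hm) (hV : IsSelfAdjoint V)
    (hVpos : ∀ ψ : E, 0 ≤ (inner ℂ ψ (V ψ) : ℂ))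
    (hg : 0 < g) (hlam : 0 ≤ lam) (hc : 0 < c)
    (hΓ : opLE ((c : ℂ) • 1) ((g : ℂ) ^ 2 • 1 - star Z * Z))
    (h : opLE (lind1 L V + (-Complex.I) • ⁅V, Hm⁆ + star N * N
      + (⁅star L, V⁆ + star N * Z)
          * Ring.inverse ((g : ℂ) ^ 2 • 1 - star Z * Z) * (⁅V, L⁆ + star Z * N)
      - (lam : ℂ) • 1) 0) :
    ∀ w : E →L[ℂ] E,
      opLE (lind1 L V + (-Complex.I) • ⁅V, Hm⁆
        - star w * ((g : ℂ) ^ 2 • 1 - star Z * Z) * w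
        + star w * (⁅V, L⁆ + star Z * N) + (⁅star L, V⁆ + star N * Z) * w
        + star N * N - (lam : ℂ) • 1) 0 :=
  stmt_10_general L Hm V N Z g lam c hV hc hΓ h
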